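/- Let l : R^d -> R be twice continuously differentiable with uniformly bounded Hessian near θ. Let X_simple and X_hard be finite sets with per-example gradient maps g_s : X_simple -> R^d and g_h : X_hard -> R^d, each of bounded norm, and suppose ∇l(θ) = ḡ_H := E_{x ∈ X_hard} g_h(x) with ḡ_H ≠ 0. Define ḡ_S := E_{x ∈ X_simple} g_s(x). Then lim_{η → 0} ( E_{x ∈ X_simple}[ l(θ - η g_s(x)) - l(θ) ] ) / ( E_{x ∈ X_hard}[ l(θ - η g_h(x)) - l(θ) ] ) = ⟨ḡ_H, ḡ_S⟩ / ⟨ḡ_H, ḡ_H⟩. -/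

import Mathlib

open scoped RealInnerProductSpace

theorem grad_align_aux {d : ℕ}
    (l : EuclideanSpace ℝ (Fin d) → ℝ) (θ gH : EuclideanSpace ℝ (Fin d))
    (hgrad : HasGradientAt l gH θ) (g : EuclideanSpace ℝ (Fin d)) :
    Filter.Tendsto (fun η : ℝ => (l (θ - η • g) - l θ) / η)
      (nhdsWithin 0 (Set.Ioi 0)) (nhds (-⟪gH, g⟫)) := by
  have hc : HasDerivAt (fun η : ℝ => θ - η • g) (-g) 0 := by
    simpa using ((hasDerivAt_id (0:ℝ)).smul_const g).const_sub θ
  have h0 : θ - (0:ℝ) • g = θ := by simp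
  have hF := hgrad.hasFDerivAt
  rw [← h0] at hF
  have hf : HasDerivAt (fun η : ℝ => l (θ - η • g)) (-⟪gH, g⟫) 0 := by
    have := hF.comp_hasDerivAt 0 hc
    simp [inner_neg_right] at this
    exact this
  have hslope := hasDerivAt_iff_tendsto_slope.mp hf
  have hmono : nhdsWithin (0:ℝ) (Set.Ioi 0) ≤ nhdsWithin 0 {0}ᶜ :=
    nhdsWithin_mono 0 (fun x hx => ne_of_gt hx)
  refine (hslope.mono_left hmono).congr fun η => ?_
  simp [slope_def_field, div_eq_mul_inv]

theorem grad_align_aux2 {d : ℕ} {α : Type*}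
    (l : EuclideanSpace ℝ (Fin d) → ℝ) (θ gH : EuclideanSpace ℝ (Fin d))
    (hgrad : HasGradientAt l gH θ)
    (X : Finset α) (g : α → EuclideanSpace ℝ (Fin d)) :
    Filter.Tendsto (fun η : ℝ => ((X.card : ℝ)⁻¹ * ∑ x ∈ X, (l (θ - η • g x) - l θ)) / η)
      (nhdsWithin 0 (Set.Ioi 0))
      (nhds (-⟪gH, (X.card : ℝ)⁻¹ • ∑ x ∈ X, g x⟫)) := by
  have hsum : Filter.Tendsto (fun η : ℝ => ∑ x ∈ X, (l (θ - η • g x) - l θ) / η)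
      (nhdsWithin 0 (Set.Ioi 0)) (nhds (∑ x ∈ X, -⟪gH, g x⟫)) :=
    tendsto_finset_sum _ fun x _ => grad_align_aux l θ gH hgrad (g x)
  have h := hsum.const_mul ((X.card : ℝ)⁻¹)
  have heq : (X.card : ℝ)⁻¹ * ∑ x ∈ X, -⟪gH, g x⟫
      = -⟪gH, (X.card : ℝ)⁻¹ • ∑ x ∈ X, g x⟫ := by
    simp [inner_smul_right, inner_sum, Finset.mul_sum]
  rw [heq] at h
  exact h.congr fun η => by rw [mul_div_assoc, Finset.sum_div]

/-- Theorem `grad_align_SGD`: if `l` is twice continuously differentiable with uniformly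
bounded Hessian near `θ`, the per-example gradients on the SIMPLE set `Xs` and HARD set `Xh`
are bounded, and `∇l(θ) = ḡ_H ≠ 0` (the average HARD gradient), then the ratio of the expected
loss drops after one SGD step on a random SIMPLE example versus a random HARD example tends,
as `η → 0⁺`, to the gradient alignment score `⟪ḡ_H, ḡ_S⟫ / ⟪ḡ_H, ḡ_H⟫`. -/
theorem stmt2 {d : ℕ} {ι κ : Type*}
    (l : EuclideanSpace ℝ (Fin d) → ℝ) (θ : EuclideanSpace ℝ (Fin d))
    (U : Set (EuclideanSpace ℝ (Fin d))) (hU : U ∈ nhds θ)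
    (hl : ContDiffOn ℝ 2 l U) (L : ℝ)
    (hHess : ∀ x ∈ U, ‖iteratedFDeriv ℝ 2 l x‖ ≤ L)
    (Xs : Finset ι) (Xh : Finset κ) (hXs : Xs.Nonempty) (hXh : Xh.Nonempty)
    (gs : ι → EuclideanSpace ℝ (Fin d)) (gh : κ → EuclideanSpace ℝ (Fin d))
    (C : ℝ) (hgs : ∀ x ∈ Xs, ‖gs x‖ ≤ C) (hgh : ∀ x ∈ Xh, ‖gh x‖ ≤ C)
    (gS gH : EuclideanSpace ℝ (Fin d))
    (hgS : gS = (Xs.card : ℝ)⁻¹ • ∑ x ∈ Xs, gs x)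
    (hgH : gH = (Xh.card : ℝ)⁻¹ • ∑ x ∈ Xh, gh x)
    (hgrad : gradient l θ = gH) (hne : gH ≠ 0) :
    Filter.Tendsto (fun η : ℝ =>
      ((Xs.card : ℝ)⁻¹ * ∑ x ∈ Xs, (l (θ - η • gs x) - l θ)) /
      ((Xh.card : ℝ)⁻¹ * ∑ x ∈ Xh, (l (θ - η • gh x) - l θ)))
      (nhdsWithin 0 (Set.Ioi 0)) (nhds (⟪gH, gS⟫ / ⟪gH, gH⟫)) := by
  have hdiff : DifferentiableAt ℝ l θ :=
    ((hl.contDiffAt hU).differentiableAt (by norm_num))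
  have hG : HasGradientAt l gH θ := hgrad ▸ hdiff.hasGradientAt
  have h1 := grad_align_aux2 l θ gH hG Xs gs
  have h2 := grad_align_aux2 l θ gH hG Xh gh
  rw [← hgS] at h1
  rw [← hgH] at h2
  have hne' : -⟪gH, gH⟫ ≠ 0 := by
    exact neg_ne_zero.mpr ((inner_self_ne_zero (𝕜 := ℝ)).mpr hne)
  have hratio := h1.div h2 hne'
  have hval : -⟪gH, gS⟫ / -⟪gH, gH⟫ = ⟪gH, gS⟫ / ⟪gH, gH⟫ := neg_div_neg_eq _ _
  rw [hval] at hratio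
  refine hratio.congr' ?_
  filter_upwards [self_mem_nhdsWithin] with η (hη : (0:ℝ) < η)
  simp only [Pi.div_apply]
  rw [div_div_div_cancel_right₀ (ne_of_gt hη)]
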